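/- Work in the field ℚ(q) of rational functions in one variable q over ℚ. For every integer m ≥ 1, one has ∑_{k=0}^{m} (−1)^k [m,k]_q · ( ∑_{l=0}^{k−1} q^{(m+1)(k−1) − 2l} ) = q^{−m} (q − q^{−1})^{−1} · ∏_{j=1}^{m} (1 − q^{2j}). -/

import Mathlib

noncomputable def q : RatFunc ℚ := RatFunc.X

/-- The balanced Gaussian binomial coefficient `[m, k]_q` in `ℚ(q)`. -/
noncomputable def qbinom (m k : ℕ) : RatFunc ℚ :=
  ∏ j ∈ Finset.range k,
    (q ^ ((m : ℤ) - k + j + 1) - q ^ (-((m : ℤ) - k + j + 1))) /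
      (q ^ ((j : ℤ) + 1) - q ^ (-((j : ℤ) + 1)))

/-!
Multiplied by `q - q⁻¹`, the inner geometric sum telescopes to two monomials, and then
`(q - q⁻¹) q^m` times the double sum is `G(q²) - G(1)` with
`G(z) = ∑ₖ (-1)^k q^(k(m-1)) [m,k]_q z^k`. By the q-binomial theorem
`G(z) = ∏_{j<m} (1 - z q^(2j))`, which vanishes at `z = 1` as soon as `m ≥ 1`.
-/

open Finset

section ZpowIdentities

variable {K : Type*} [Field K] {x : K}

lemma zpow_add_sub_zpow_neg_add (hx : x ≠ 0) (a b : ℤ) :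
    x ^ (a + b) - x ^ (-(a + b)) =
      x ^ b * (x ^ a - x ^ (-a)) + x ^ (-a) * (x ^ b - x ^ (-b)) := by
  simp only [zpow_neg, zpow_add₀ hx]
  ring

lemma zpow_mul_zpow_of_add_eq (hx : x ≠ 0) {a b c : ℤ} (h : a + b = c) :
    x ^ a * x ^ b = x ^ c := by
  rw [← zpow_add₀ hx, h]

lemma sub_inv_mul_sum_range_zpow (hx : x ≠ 0) (a : ℤ) (k : ℕ) :
    (x - x⁻¹) * ∑ l ∈ range k, x ^ (a - 2 * l) = x ^ (a + 1) - x ^ (a + 1 - 2 * k) := by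
  induction k with
  | zero => simp
  | succ k ih =>
    have hk : x ^ (a + 1 - 2 * (k : ℤ)) = x ^ (a - 2 * k) * x := by
      rw [← zpow_add_one₀ hx]; ring_nf
    have hk' : x ^ (a + 1 - 2 * ((k + 1 : ℕ) : ℤ)) = x ^ (a - 2 * k) * x⁻¹ := by
      rw [← zpow_sub_one₀ hx]; push_cast; ring_nf
    rw [sum_range_succ, mul_add, ih, hk, hk']
    ring

lemma sub_inv_mul_zpow_mul_sum_range_zpow (hx : x ≠ 0) (m k : ℕ) :
    (x - x⁻¹) * x ^ (m : ℤ) * ∑ l ∈ range k, x ^ (((m : ℤ) + 1) * ((k : ℤ) - 1) - 2 * l) =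
      x ^ ((k : ℤ) * (m - 1)) * ((x ^ (2 : ℤ)) ^ k - 1) := by
  rw [mul_comm (x - x⁻¹), mul_assoc, sub_inv_mul_sum_range_zpow hx,
    ← zpow_natCast (x ^ (2 : ℤ)), ← zpow_mul]
  simp only [mul_sub, mul_one, ← zpow_add₀ hx]
  ring_nf

lemma prod_range_succ_one_sub_mul_zpow (hx : x ≠ 0) (m : ℕ) (z : K) :
    ∏ j ∈ range (m + 1), (1 - z * x ^ (2 * (j : ℤ))) =
      (∏ j ∈ range m, (1 - z * x ^ (2 : ℤ) * x ^ (2 * (j : ℤ)))) * (1 - z) := by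
  rw [prod_range_succ']
  congr 1
  · refine prod_congr rfl fun j _ => ?_
    rw [mul_assoc, zpow_mul_zpow_of_add_eq hx
      (show (2 : ℤ) + 2 * j = 2 * ((j + 1 : ℕ) : ℤ) by push_cast; ring)]
  · simp

end ZpowIdentities

lemma sum_range_mul_one_sub_of_coeff {R : Type*} [CommRing R] (m : ℕ) (f g : ℕ → R) (z : R)
    (h0 : f 0 = g 0) (hsucc : ∀ k < m, f (k + 1) = g (k + 1) - g k) (hlast : f (m + 1) = -g m) :
    ∑ k ∈ range (m + 2), f k * z ^ k = (∑ k ∈ range (m + 1), g k * z ^ k) * (1 - z) := by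
  rw [mul_one_sub, sum_mul, sum_range_succ' _ (m + 1), sum_range_succ _ m,
    sum_range_succ' (fun k => g k * z ^ k) m, sum_range_succ (fun k => g k * z ^ k * z) m,
    sum_congr rfl fun k hk => by rw [hsucc k (mem_range.1 hk)], h0, hlast]
  simp only [sub_mul, sum_sub_distrib, pow_succ, mul_assoc]
  ring

lemma q_ne_zero : q ≠ 0 := RatFunc.X_ne_zero

lemma q_pow_ne_one {n : ℕ} (hn : n ≠ 0) : q ^ n ≠ 1 := by
  rw [q, ← RatFunc.algebraMap_X, ← map_pow, ← map_one (algebraMap (Polynomial ℚ) (RatFunc ℚ)),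
    Ne, (RatFunc.algebraMap_injective ℚ).eq_iff]
  intro h
  simpa [hn] using congrArg Polynomial.natDegree h

/-- `(q - q⁻¹)` times the quantum integer `[n]`; the normalisation cancels in `qbinom`. -/
noncomputable def qDiff (n : ℕ) : RatFunc ℚ := q ^ (n : ℤ) - q ^ (-(n : ℤ))

lemma qDiff_ne_zero {n : ℕ} (hn : n ≠ 0) : qDiff n ≠ 0 := by
  rw [qDiff, zpow_neg, zpow_natCast, sub_ne_zero, Ne,
    ← mul_eq_one_iff_eq_inv₀ (pow_ne_zero n q_ne_zero), ← pow_add]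
  exact q_pow_ne_one (by omega)

noncomputable def qFact (m : ℕ) : RatFunc ℚ := ∏ j ∈ range m, qDiff (j + 1)

lemma qDiff_add (a b : ℕ) :
    qDiff (a + b) = q ^ (b : ℤ) * qDiff a + q ^ (-(a : ℤ)) * qDiff b := by
  rw [qDiff, Nat.cast_add, zpow_add_sub_zpow_neg_add q_ne_zero, qDiff, qDiff]

lemma qFact_ne_zero (m : ℕ) : qFact m ≠ 0 :=
  prod_ne_zero_iff.2 fun j _ => qDiff_ne_zero j.succ_ne_zero

lemma qFact_succ (m : ℕ) : qFact (m + 1) = qFact m * qDiff (m + 1) :=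
  prod_range_succ _ m

lemma qbinom_eq_qFact_div (a b : ℕ) :
    qbinom (a + b) b = qFact (a + b) / (qFact b * qFact a) := by
  have hfactor : ∀ j ∈ range b,
      (q ^ (((a + b : ℕ) : ℤ) - b + j + 1) - q ^ (-(((a + b : ℕ) : ℤ) - b + j + 1))) /
        (q ^ ((j : ℤ) + 1) - q ^ (-((j : ℤ) + 1))) = qDiff (a + j + 1) / qDiff (j + 1) := by
    intro j _
    simp only [qDiff]
    push_cast
    ring_nf
  have hnum : qFact (a + b) = qFact a * ∏ j ∈ range b, qDiff (a + j + 1) :=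
    prod_range_add _ _ _
  rw [qbinom, prod_congr rfl hfactor, prod_div_distrib, hnum]
  change _ / qFact b = _
  field_simp [qFact_ne_zero]

lemma qbinom_zero (m : ℕ) : qbinom m 0 = 1 := prod_range_zero _

lemma qbinom_self (m : ℕ) : qbinom m m = 1 := by
  simpa [div_self (qFact_ne_zero m), show qFact 0 = 1 from prod_range_zero _] using
    qbinom_eq_qFact_div 0 m

lemma qbinom_succ_succ (c b : ℕ) :
    qbinom (c + b + 2) (b + 1) =
      q ^ ((b : ℤ) + 1) * qbinom (c + b + 1) (b + 1) +
        q ^ (-((c : ℤ) + 1)) * qbinom (c + b + 1) b := by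
  rw [show c + b + 2 = (c + 1) + (b + 1) by omega, qbinom_eq_qFact_div,
    show c + b + 1 = c + (b + 1) by omega, qbinom_eq_qFact_div,
    show c + (b + 1) = (c + 1) + b by omega, qbinom_eq_qFact_div,
    show (c + 1) + (b + 1) = (c + 1 + b) + 1 by omega, qFact_succ (c + 1 + b), qFact_succ b,
    qFact_succ c, show c + 1 + b + 1 = (c + 1) + (b + 1) by omega, qDiff_add]
  have := qDiff_ne_zero b.succ_ne_zero
  have := qDiff_ne_zero c.succ_ne_zero
  push_cast
  field_simp [qFact_ne_zero]

theorem sum_qbinom_mul_pow (m : ℕ) (z : RatFunc ℚ) :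
    ∑ k ∈ range (m + 1), (-1) ^ k * q ^ ((k : ℤ) * (m - 1)) * qbinom m k * z ^ k =
      ∏ j ∈ range m, (1 - z * q ^ (2 * (j : ℤ))) := by
  induction m generalizing z with
  | zero => simp [qbinom_zero]
  | succ m ih =>
    have hcoeff : ∀ k ∈ range (m + 1),
        (-1) ^ k * q ^ ((k : ℤ) * (m - 1)) * qbinom m k * (z * q ^ (2 : ℤ)) ^ k =
          (-1) ^ k * q ^ ((k : ℤ) * (m + 1)) * qbinom m k * z ^ k := by
      intro k _
      rw [mul_pow, ← zpow_natCast (q ^ (2 : ℤ)), ← zpow_mul,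
        ← zpow_mul_zpow_of_add_eq q_ne_zero (show (k : ℤ) * (m - 1) + 2 * k = k * (m + 1) by ring)]
      ring
    rw [prod_range_succ_one_sub_mul_zpow q_ne_zero, ← ih, sum_congr rfl hcoeff]
    -- `G_{m+1}(z) = G_m(q² z) (1 - z)`, compared coefficientwise via the q-Pascal rule
    apply sum_range_mul_one_sub_of_coeff
    · simp [qbinom_zero]
    · intro k hk
      obtain ⟨d, rfl⟩ : ∃ d, m = d + k + 1 := ⟨m - k - 1, by omega⟩
      rw [qbinom_succ_succ d k]
      push_cast
      linear_combination (-1) ^ (k + 1) * qbinom (d + k + 1) (k + 1) *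
          zpow_mul_zpow_of_add_eq q_ne_zero
            (show ((k : ℤ) + 1) * (d + k + 1 + 1 - 1) + (k + 1) = (k + 1) * (d + k + 1 + 1) by
              ring) +
        (-1) ^ (k + 1) * qbinom (d + k + 1) k *
          zpow_mul_zpow_of_add_eq q_ne_zero
            (show ((k : ℤ) + 1) * (d + k + 1 + 1 - 1) + -(d + 1) = k * (d + k + 1 + 1) by ring)
    · rw [qbinom_self, qbinom_self, pow_succ]
      push_cast
      ring_nf

/-- The closed evaluation of the double sum computing the coefficient `a_i`
(equation (3.29)) in the proof of Theorem 3.3. -/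
theorem stmt_7 (m : ℕ) (hm : 1 ≤ m) :
    ∑ k ∈ Finset.range (m + 1),
        (-1 : RatFunc ℚ) ^ k * qbinom m k *
          (∑ l ∈ Finset.range k,
            q ^ (((m : ℤ) + 1) * ((k : ℤ) - 1) - 2 * l)) =
      q ^ (-(m : ℤ)) * (q - q⁻¹)⁻¹ *
        ∏ j ∈ Finset.range m, (1 - q ^ (2 * ((j : ℤ) + 1))) := by
  have hsum : (q - q⁻¹) * q ^ (m : ℤ) * ∑ k ∈ range (m + 1), (-1 : RatFunc ℚ) ^ k * qbinom m k *
      ∑ l ∈ range k, q ^ (((m : ℤ) + 1) * ((k : ℤ) - 1) - 2 * l) =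
        ∏ j ∈ range m, (1 - q ^ (2 * ((j : ℤ) + 1))) := by
    have hvanish : ∏ j ∈ range m, (1 - 1 * q ^ (2 * (j : ℤ))) = 0 :=
      prod_eq_zero (mem_range.2 hm) (by simp)
    calc _ = ∑ k ∈ range (m + 1),
          ((-1) ^ k * q ^ ((k : ℤ) * (m - 1)) * qbinom m k * (q ^ (2 : ℤ)) ^ k -
            (-1) ^ k * q ^ ((k : ℤ) * (m - 1)) * qbinom m k * 1 ^ k) := by
          rw [mul_sum]
          refine sum_congr rfl fun k _ => ?_
          linear_combination
            (-1) ^ k * qbinom m k * sub_inv_mul_zpow_mul_sum_range_zpow q_ne_zero m k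
      _ = ∏ j ∈ range m, (1 - q ^ (2 : ℤ) * q ^ (2 * (j : ℤ))) := by
          rw [sum_sub_distrib, sum_qbinom_mul_pow, sum_qbinom_mul_pow, hvanish, sub_zero]
      _ = _ := prod_congr rfl fun j _ => by
          rw [zpow_mul_zpow_of_add_eq q_ne_zero (show (2 : ℤ) + 2 * j = 2 * (j + 1) by ring)]
  have hq : q - q⁻¹ ≠ 0 := by simpa [qDiff] using qDiff_ne_zero one_ne_zero
  rw [← hsum, mul_assoc (q - q⁻¹), zpow_neg, mul_assoc, inv_mul_cancel_left₀ hq,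
    inv_mul_cancel_left₀ (zpow_ne_zero _ q_ne_zero)]
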